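/- arXiv:2107.05137 — 5 statements merged into one kernel-verified Lean document; each statement's English description precedes it below -/
import Mathlib

section
/- Let p be a prime, e ≥ 1, and 0 ≤ f < e. If p^e - 1 divides p^f + 1, then p^e ≤ 4. -/
theorem stmt_0 (p e f : ℕ) (hp : p.Prime) (he : 1 ≤ e) (hf : f < e)
    (hdvd : (p ^ e - 1) ∣ (p ^ f + 1)) : p ^ e ≤ 4 := by
  have hp2 := hp.two_le
  have h1 : p ^ e - 1 ≤ p ^ f + 1 := Nat.le_of_dvd (by positivity) hdvd
  have h2 : 2 * p ^ f ≤ p ^ e := by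
    calc 2 * p ^ f ≤ p * p ^ f := Nat.mul_le_mul_right _ hp2
    _ = p ^ (f + 1) := by ring
    _ ≤ p ^ e := Nat.pow_le_pow_right hp.one_lt.le hf
  have h3 : 1 ≤ p ^ f := Nat.one_le_pow _ _ hp.pos
  omega
end

section
/- Let F be a finite field and λ ∈ F a generator of the multiplicative group of units of F. If there is a ring automorphism σ of F with σ(λ) = λ⁻¹, then |F| ≤ 4. -/
open Polynomial

theorem stmt_1 (F : Type*) [Field F] [Fintype F] (lam : Fˣ)
    (hgen : ∀ x : Fˣ, x ∈ Subgroup.zpowers lam)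
    (σ : F ≃+* F) (hσ : σ (lam : F) = ((lam⁻¹ : Fˣ) : F)) :
    Fintype.card F ≤ 4 := by
  -- σ inverts every nonzero element
  have key : ∀ x : F, x ≠ 0 → σ x = x⁻¹ := by
    intro x hx
    obtain ⟨u, rfl⟩ := (isUnit_iff_ne_zero.mpr hx)
    obtain ⟨k, hk⟩ := hgen u
    rw [← hk]
    rw [Units.val_zpow_eq_zpow_val, map_zpow₀, hσ]
    rw [← Units.val_zpow_eq_zpow_val, ← Units.val_zpow_eq_zpow_val]
    rw [← Units.val_inv_eq_inv_val]
    congr 1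
    group
  -- every x ≠ 0, -1 satisfies x^2 + x + 1 = 0
  have key2 : ∀ x : F, x ≠ 0 → x ≠ -1 → x ^ 2 + x + 1 = 0 := by
    intro x hx0 hx1
    have h1 : x + 1 ≠ 0 := fun h => hx1 (by linear_combination h)
    have h2 : σ (x + 1) = σ x + σ 1 := map_add σ _ _
    rw [key _ h1, key _ hx0, map_one] at h2
    field_simp at h2
    linear_combination -h2
  classical
  by_contra hcard
  push_neg at hcard
  set p : F[X] := X ^ 2 + X + 1 with hp
  have hp0 : p ≠ 0 := fun h => by simpa [hp] using congrArg (Polynomial.eval 0) h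
  have hdeg : p.natDegree = 2 := by
    unfold p; compute_degree!
  have hsub : (Finset.univ \ {0, -1} : Finset F) ⊆ p.roots.toFinset := by
    intro x hx
    simp only [Finset.mem_sdiff, Finset.mem_insert, Finset.mem_singleton, not_or] at hx
    rw [Multiset.mem_toFinset, Polynomial.mem_roots hp0]
    simp [Polynomial.IsRoot, hp, key2 x hx.2.1 hx.2.2]
  have h1 := Finset.card_le_card hsub
  have h2 : p.roots.toFinset.card ≤ 2 := by
    refine le_trans (Multiset.toFinset_card_le _) ?_
    have := p.card_roots' 
    omega
  have h3 : (Finset.univ \ {0, -1} : Finset F).card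
      = Fintype.card F - ({0, -1} : Finset F).card := by
    rw [Finset.card_sdiff_of_subset (Finset.subset_univ _), Finset.card_univ]
  have h4 : ({0, -1} : Finset F).card ≤ 2 := Finset.card_insert_le _ _ |>.trans (by simp)
  omega
end

section
/- In the alternating group A₈, the involutions s₁ = (1 2)(3 4)(5 6)(7 8), s₂ = (1 3)(4 6), s₃ = (3 4)(6 7) generate A₈, and s₁s₂ has order 6, s₁s₃ has order 4, and s₂s₃ has order 5. -/
open Equiv

private def gf : Fin 3 → Perm (Fin 8) :=
  ![swap 0 1 * swap 2 3 * swap 4 5 * swap 6 7, swap 0 2 * swap 3 5, swap 2 3 * swap 5 6]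

private def W : List (List (Fin 3)) :=
  [[0,2,1,0,2,1,0,2,1,0,2,1,0,2,1],
  [1,0,2,1,0,2,1,0,2,1,0,2,1,0,2],
  [0,1,2,0,1,2,0,1,2,0,1,2,0,1,2],
  [2,1,0,2,1,0,2,1,0,2,1,0,2,1,0],
  [1,0,2,1,0,2,0,2,1,2,1,0,2,1],
  [1,2,0,1,2,1,0,2,0,2,1,2,0,1],
  [1,0,1,2,0,1,0,1,0,2,1,2,0,1,2],
  [1,0,1,2,1,0,2,0,2,1,2,1,0,2,1],
  [0,1,0,1,0,1,2,1,0,2,1,2,1,0,1],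
  [1,0,1,2,1,2,0,1,2,0,1,0,1,0,1],
  [1,2,0,1,0,2,0,1,2,1,2,1,0,1],
  [1,0,1,2,1,2,1,0,2,0,1,0,2,1],
  [1,0,2,0,2,1,0,2,0,2,1,2],
  [2,1,0,2,0,2,1,0,2,0,2,1],
  [2,1,2,1,0,2,1,0,2,1,2,0,2,1,2],
  [2,1,2,0,2,1,2,0,1,2,0,1,2,1,2],
  [1,2,1,0,2,0,2,1,0,2,0,2],
  [0,2,0,2,1,0,2,0,2,1,2,1],
  [0,2,0,1,2,1,2,1,0,2,0,1],
  [1,0,2,0,1,2,1,2,1,0,2,0],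
  [0,1,2,1,0,1,0,1,2,1,0,1],
  [1,0,1,2,1,0,1,0,1,2,1,0],
  [1,2,1,0,2,1,0,2,1,2,0,2,1],
  [1,2,0,2,1,2,0,1,2,0,1,2,1],
  [0,2,0,1,2,1,0,2,0,2,1,2],
  [2,1,0,2,0,2,1,2,1,0,2,0],
  [1,2,1,0,2,0,2,1,0,2,0,1],
  [0,2,0,1,0,2,0,1,2,1,2,1],
  [1,2,1,2,0,1,2,0,1,0,1],
  [1,0,1,0,2,1,0,2,1,2,1],
  [1,0,2,1,0,2,0,2,1,2,0,2,1],
  [1,2,0,2,1,0,2,0,2,1,2,0,1],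
  [1,0,2,1,2,0,1,0,1,0,2,0,1,2],
  [2,1,0,2,0,1,0,1,0,2,1,2,0,1],
  [1,2,0,2,1,0,2,0,2,1,0,1],
  [1,0,1,0,2,0,2,1,2,0,2,1],
  [0,2,0,1,0,2,0,1,2],
  [0,2,0,2,1,0,2,0,1],
  [1,0,1,0,2,0,2,1,0,2,1],
  [1,2,0,1,0,2,0,2,1,0,1],
  [1,0,2,0,1,0,2,1,0,2,1,0,1],
  [1,0,1,2,0,1,2,0,1,0,2,0,1],
  [0,1,2,1,0,2,0,2,1,2,1,0,2],
  [2,0,1,2,1,0,2,0,2,1,2,1,0],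
  [2,0,1,2,1,0,2,0,2,1,2,0],
  [0,2,1,0,2,0,2,1,2,1,0,2],
  [2,1,2,1,0,1,0,1,2,1,0,1,0,2],
  [2,0,1,0,1,2,1,0,1,0,1,2,1,2],
  [0,1,2,1,2,0,1,2,0,1,0,1,0],
  [0,1,0,1,0,2,1,0,2,1,2,1,0],
  [0,1,2,1,2,1,0,2,0,1,0,2],
  [2,0,1,0,2,0,1,2,1,2,1,0],
  [0,1,2,1,0,2,0,2,1,2,0,2],
  [2,0,2,1,0,2,0,2,1,2,1,0],
  [2,0,1,2,1,2,0,1,2,0,1,0,1,0,2],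
  [2,0,1,0,1,0,2,1,0,2,1,2,1,0,2],
  [1,2,1,0,1,0,1,2,1,0,1,0],
  [0,1,0,1,2,1,0,1,0,1,2,1],
  [2,0,1,2,1,2,1,0,2,0,1,0],
  [0,1,0,2,0,1,2,1,2,1,0,2],
  [1,2,0,2,1,0,2,0,2,1,2,1,0,1],
  [1,0,1,2,1,0,2,0,2,1,2,0,2,1],
  [0,1,0,1,0,2,0,2,1,0,2,1,0],
  [0,1,2,0,1,0,2,0,2,1,0,1,0],
  [0,1,0,2,0,1,2,0,2],
  [0,2,1,0,2,0,1,0,2],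
  [2,1,0,1,0,1,2,1,0,1,0,1],
  [1,0,1,0,1,2,1,0,1,0,1,2],
  [1,2,0,1,2,1,2,1,0,2,0,1,0,1],
  [1,0,1,0,2,0,1,2,1,2,1,0,2,1],
  [0,1,0,1,2,0,1,0,1,0,2,0,1,0,2],
  [0,1,0,2,0,1,0,2,1,0,2,1,0,1,0],
  [2,0,2,1,0,2,0,2,1,2,0],
  [0,2,1,0,2,0,2,1,2,0,2],
  [2,1,0,2,0,2,1,0,2,0,2],
  [0,2,0,2,1,0,2,0,2,1,2],
  [0,2,0,1,0,2,0,2,1],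
  [1,0,2,0,2,1,0,2,0],
  [0,1,0,2,0,2,1,0,2],
  [2,0,1,0,2,0,2,1,0],
  [2,0,2,1,2,0,1,2,0,1,2],
  [2,1,0,2,1,0,2,1,2,0,2],
  [2,0,2,1,0,2,1,0,2,1,0,2,0],
  [0,2,0,1,2,0,1,2,0,1,2,0,2],
  [2,0,2,1,0,2,0,2,1,0],
  [0,1,0,2,0,2,1,2,0,2],
  [2,1,0,2,0,2,1,0,2,0],
  [0,2,0,1,0,2,0,2,1,2],
  [2,1,2,0,1,2,0,1,0],
  [0,1,0,2,1,0,2,1,2],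
  [0,2,0,1,0,2,1,0,2,1,0],
  [0,1,2,0,1,2,0,1,0,2,0],
  [0,2,1,0,2,1,0,2,1,0,2,0,2],
  [0,2,0,2,1,2,0,1,2,0,1,2,0],
  [0,2,1,2,0,1,2,0,1],
  [1,0,2,1,0,2,1,2,0],
  [0,2,1,0,2,0,2,1,0,2],
  [2,0,1,0,2,0,2,1,2,0],
  [0,2,0,2,1,0,2,0,2,1],
  [1,0,2,0,2,1,0,2,0,2],
  [0,2,0,2,1,0,2,1,0,2,1,0,2],
  [2,0,1,2,0,1,2,0,1,0,2,0,2],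
  [1,2,0,1,2,0,1,0,2],
  [2,0,1,0,2,1,0,2,1],
  [0,2,1,0,2,1,2,0,1],
  [1,0,2,1,2,0,1,2,0],
  [0,1,0,2,1,2,0,1,2],
  [2,1,0,2,1,2,0,1,0],
  [1,2,0,1,0,2,1,2,0],
  [0,2,1,2,0,1,0,2,1],
  [2,0,1,2,0,1,0,2,1],
  [0,1,2,0,1,0,2,1,2]]

private lemma word_mem {H : Subgroup (Perm (Fin 8))} (h : ∀ i, gf i ∈ H) :
    ∀ l : List (Fin 3), (l.map gf).prod ∈ H := by
  intro l
  induction l with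
  | nil => simpa using H.one_mem
  | cons i l ih => rw [List.map_cons, List.prod_cons]; exact H.mul_mem (h i) ih

set_option maxRecDepth 100000 in
set_option maxHeartbeats 4000000 in
private lemma covers : ∀ a b c : Fin 8, a ≠ b → a ≠ c → b ≠ c →
    ∃ l ∈ W, (l.map gf).prod = swap a c * swap a b := by decide

private lemma threeCycle_eq {σ : Perm (Fin 8)} (hσ : σ.IsThreeCycle) :
    ∃ a b c : Fin 8, a ≠ b ∧ a ≠ c ∧ b ≠ c ∧ σ = swap a c * swap a b := by
  obtain ⟨a, ha, -⟩ := hσ.isCycle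
  have h3 : σ ^ 3 = 1 := by rw [← hσ.orderOf]; exact pow_orderOf_eq_one σ
  have h3' : ∀ x, σ (σ (σ x)) = x := by
    intro x
    have h := Equiv.Perm.ext_iff.1 h3 x
    simpa [pow_succ, Equiv.Perm.mul_apply] using h
  have hab : a ≠ σ a := Ne.symm ha
  have hac : a ≠ σ (σ a) := fun h => ha ((congrArg σ h).trans (h3' a))
  have hbc : σ a ≠ σ (σ a) := fun h => ha (σ.injective h).symm
  refine ⟨a, σ a, σ (σ a), hab, hac, hbc, ?_⟩
  have hsupp : σ.support = {a, σ a, σ (σ a)} := by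
    have hsub : ({a, σ a, σ (σ a)} : Finset (Fin 8)) ⊆ σ.support := by
      intro x hx
      simp only [Finset.mem_insert, Finset.mem_singleton] at hx
      rcases hx with rfl | rfl | rfl
      · exact Equiv.Perm.mem_support.2 ha
      · exact Equiv.Perm.mem_support.2 (fun h => hbc h.symm)
      · exact Equiv.Perm.mem_support.2 (by rw [h3' a]; exact hac)
    refine (Finset.eq_of_subset_of_card_le hsub ?_).symm
    rw [hσ.card_support]
    rw [Finset.card_insert_of_notMem (by simp [hab, hac]),
      Finset.card_insert_of_notMem (by simp [hbc]), Finset.card_singleton]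
  ext x
  by_cases hxa : x = a
  · subst hxa
    rw [Equiv.Perm.mul_apply, swap_apply_left, swap_apply_of_ne_of_ne ha hbc]
  by_cases hxb : x = σ a
  · subst hxb
    rw [Equiv.Perm.mul_apply, swap_apply_right, swap_apply_left]
  by_cases hxc : x = σ (σ a)
  · subst hxc
    rw [Equiv.Perm.mul_apply, swap_apply_of_ne_of_ne (Ne.symm hac) (Ne.symm hbc),
      swap_apply_right, h3' a]
  · have hx : x ∉ σ.support := by rw [hsupp]; simp [hxa, hxb, hxc]
    rw [Equiv.Perm.notMem_support.1 hx, Equiv.Perm.mul_apply,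
      swap_apply_of_ne_of_ne hxa hxb, swap_apply_of_ne_of_ne hxa hxc]

set_option maxRecDepth 40000 in
theorem stmt_4 :
    let s₁ : Perm (Fin 8) := swap 0 1 * swap 2 3 * swap 4 5 * swap 6 7
    let s₂ : Perm (Fin 8) := swap 0 2 * swap 3 5
    let s₃ : Perm (Fin 8) := swap 2 3 * swap 5 6
    orderOf s₁ = 2 ∧ orderOf s₂ = 2 ∧ orderOf s₃ = 2 ∧
    Subgroup.closure {s₁, s₂, s₃} = alternatingGroup (Fin 8) ∧
    orderOf (s₁ * s₂) = 6 ∧ orderOf (s₁ * s₃) = 4 ∧ orderOf (s₂ * s₃) = 5 := by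
  intro s₁ s₂ s₃
  have hgen : ∀ i, gf i ∈ Subgroup.closure {s₁, s₂, s₃} := by
    intro i
    fin_cases i
    · exact Subgroup.subset_closure (by simp [gf, s₁])
    · exact Subgroup.subset_closure (by simp [gf, s₂])
    · exact Subgroup.subset_closure (by simp [gf, s₃])
  refine ⟨?_, ?_, ?_, ?_, ?_, ?_, ?_⟩
  · exact orderOf_eq_prime (by decide) (by decide)
  · exact orderOf_eq_prime (by decide) (by decide)
  · exact orderOf_eq_prime (by decide) (by decide)
  · refine le_antisymm ((Subgroup.closure_le _).2 ?_) ?_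
    · intro x hx
      simp only [Set.mem_insert_iff, Set.mem_singleton_iff] at hx
      rcases hx with rfl | rfl | rfl <;> exact Equiv.Perm.mem_alternatingGroup.2 (by decide)
    · rw [← Equiv.Perm.closure_three_cycles_eq_alternating]
      refine (Subgroup.closure_le _).2 ?_
      intro σ hσ
      obtain ⟨a, b, c, hab, hac, hbc, rfl⟩ := threeCycle_eq hσ
      obtain ⟨l, -, hl⟩ := covers a b c hab hac hbc
      exact hl ▸ word_mem hgen l
  · exact (orderOf_eq_iff (by norm_num)).2 ⟨by decide, by decide⟩
  · exact (orderOf_eq_iff (by norm_num)).2 ⟨by decide, by decide⟩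
  · exact (orderOf_eq_iff (by norm_num)).2 ⟨by decide, by decide⟩
end

section
/- The alternating group A₅ contains three involutions a, b, c such that a and b commute and a, b, c together generate A₅. -/
open Equiv Equiv.Perm Subgroup

private def pa : Equiv.Perm (Fin 5) := Equiv.swap 0 1 * Equiv.swap 2 3
private def pb : Equiv.Perm (Fin 5) := Equiv.swap 0 2 * Equiv.swap 1 3
private def pc : Equiv.Perm (Fin 5) := Equiv.swap 0 1 * Equiv.swap 3 4

theorem stmt_5 :
    ∃ a b c : Equiv.Perm (Fin 5),
      a ∈ alternatingGroup (Fin 5) ∧ b ∈ alternatingGroup (Fin 5) ∧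
      c ∈ alternatingGroup (Fin 5) ∧
      orderOf a = 2 ∧ orderOf b = 2 ∧ orderOf c = 2 ∧
      a * b = b * a ∧
      Subgroup.closure {a, b, c} = alternatingGroup (Fin 5) := by
  refine ⟨pa, pb, pc, ?_, ?_, ?_, ?_, ?_, ?_, ?_, ?_⟩
  · rw [Equiv.Perm.mem_alternatingGroup]; decide
  · rw [Equiv.Perm.mem_alternatingGroup]; decide
  · rw [Equiv.Perm.mem_alternatingGroup]; decide
  · exact orderOf_eq_prime (by decide) (by decide)
  · exact orderOf_eq_prime (by decide) (by decide)
  · exact orderOf_eq_prime (by decide) (by decide)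
  · decide
  · set K := Subgroup.closure {pa, pb, pc} with hK
    have haK : pa ∈ K := Subgroup.subset_closure (by simp)
    have hbK : pb ∈ K := Subgroup.subset_closure (by simp)
    have hcK : pc ∈ K := Subgroup.subset_closure (by simp)
    have hle : K ≤ alternatingGroup (Fin 5) := by
      rw [hK, Subgroup.closure_le]
      rintro x hx
      simp only [Set.mem_insert_iff, Set.mem_singleton_iff] at hx
      rcases hx with rfl | rfl | rfl <;>
        · rw [SetLike.mem_coe, Equiv.Perm.mem_alternatingGroup]; decide
    -- orders of elements
    haveI : Fact (Nat.Prime 3) := ⟨by norm_num⟩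
    haveI : Fact (Nat.Prime 5) := ⟨by norm_num⟩
    have h2 : (2 : ℕ) ∣ Nat.card K := by
      have ho : orderOf pa = 2 := orderOf_eq_prime (by decide) (by decide)
      have hd := Subgroup.orderOf_dvd_natCard K haK
      rwa [ho] at hd
    have h3 : (3 : ℕ) ∣ Nat.card K := by
      have hm : pa * pc ∈ K := mul_mem haK hcK
      have ho : orderOf (pa * pc) = 3 := orderOf_eq_prime (by decide) (by decide)
      have hd := Subgroup.orderOf_dvd_natCard K hm
      rwa [ho] at hd
    have h5 : (5 : ℕ) ∣ Nat.card K := by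
      have hm : pb * pc ∈ K := mul_mem hbK hcK
      have ho : orderOf (pb * pc) = 5 := orderOf_eq_prime (by decide) (by decide)
      have hd := Subgroup.orderOf_dvd_natCard K hm
      rwa [ho] at hd
    have h30 : (30 : ℕ) ∣ Nat.card K := by
      have h6 : (6 : ℕ) ∣ Nat.card K :=
        (by norm_num : Nat.Coprime 2 3).mul_dvd_of_dvd_of_dvd h2 h3
      exact (by norm_num : Nat.Coprime 6 5).mul_dvd_of_dvd_of_dvd h6 h5
    -- the subgroup of A5
    set L := K.subgroupOf (alternatingGroup (Fin 5)) with hL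
    have hcardA : Nat.card (alternatingGroup (Fin 5)) = 60 := by
      have := two_mul_card_alternatingGroup (α := Fin 5)
      rw [Fintype.card_perm, Fintype.card_fin] at this
      have hfac : Nat.factorial 5 = 120 := rfl
      rw [hfac] at this
      simp only [Nat.card_eq_fintype_card]
      omega
    have hcardL : Nat.card L = Nat.card K :=
      Nat.card_congr (Subgroup.subgroupOfEquivOfLe hle).toEquiv
    have hdvd : Nat.card L ∣ 60 := by
      rw [← hcardA]
      exact ⟨L.index, (Subgroup.card_mul_index L).symm⟩
    have hpos : 0 < Nat.card L := Nat.card_pos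
    have h30' : (30 : ℕ) ∣ Nat.card L := hcardL ▸ h30
    have hcases : Nat.card L = 30 ∨ Nat.card L = 60 := by
      obtain ⟨k, hk⟩ := h30'
      have hle60 : Nat.card L ≤ 60 := Nat.le_of_dvd (by norm_num) hdvd
      omega
    have hge : alternatingGroup (Fin 5) ≤ K := by
      rcases hcases with h | h
      · -- index 2 case: every 3-cycle is a square, hence in K
        have hidx : L.index = 2 := by
          have := Subgroup.card_mul_index L
          rw [h, hcardA] at this
          omega
        have h3cyc : {σ : Equiv.Perm (Fin 5) | σ.IsThreeCycle} ⊆ K := by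
          intro σ hσ
          have hmem : σ ∈ alternatingGroup (Fin 5) := hσ.mem_alternatingGroup
          have hord : orderOf σ = 3 := hσ.orderOf
          set t : alternatingGroup (Fin 5) := ⟨σ, hmem⟩ with ht
          have hsq : (t ^ 2) ^ 2 ∈ L := Subgroup.sq_mem_of_index_two hidx _
          have ht3 : t ^ 3 = 1 := by
            ext : 1
            simpa using (hord ▸ pow_orderOf_eq_one σ)
          have : (t ^ 2) ^ 2 = t := by
            rw [← pow_mul]
            norm_num
            calc t ^ 4 = t ^ 3 * t := by rw [pow_succ]
            _ = t := by rw [ht3, one_mul]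
          rw [this] at hsq
          exact (Subgroup.mem_subgroupOf).mp hsq
        have := (Subgroup.closure_le K).mpr h3cyc
        rwa [Equiv.Perm.closure_three_cycles_eq_alternating] at this
      · have : L = ⊤ := Subgroup.eq_top_of_card_eq _ (by rw [h, hcardA])
        exact Subgroup.subgroupOf_eq_top.mp this
    exact le_antisymm hle hge
end

section
/- There is no permutation g in the symmetric group S₇ such that conjugation by g sends (1 2 3 4 5) to its inverse and simultaneously sends (1 6 7)(2 4 5) to its inverse. -/
open Equiv

theorem stmt_8 :
    let x : Perm (Fin 7) := swap 0 1 * swap 1 2 * swap 2 3 * swap 3 4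
    let y : Perm (Fin 7) := (swap 0 5 * swap 5 6) * (swap 1 3 * swap 3 4)
    ¬ ∃ g : Perm (Fin 7), g * x * g⁻¹ = x⁻¹ ∧ g * y * g⁻¹ = y⁻¹ := by
  intro x y
  rintro ⟨g, h1, h2⟩
  have hx : g * x = x⁻¹ * g := by
    have := congrArg (· * g) h1
    simpa [mul_assoc] using this
  have hy : g * y = y⁻¹ * g := by
    have := congrArg (· * g) h2
    simpa [mul_assoc] using this
  have hxa : ∀ a, g (x a) = x⁻¹ (g a) := fun a => by
    simpa [Perm.mul_apply] using Equiv.ext_iff.mp hx a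
  have hya : ∀ a, g (y a) = y⁻¹ (g a) := fun a => by
    simpa [Perm.mul_apply] using Equiv.ext_iff.mp hy a
  have hx0 : x 0 = 1 := by decide
  have hx1 : x 1 = 2 := by decide
  have hx2 : x 2 = 3 := by decide
  have hx5 : x 5 = 5 := by decide
  have hy0 : y 0 = 5 := by decide
  have hy1 : y 1 = 3 := by decide
  have e1 : g 1 = x⁻¹ (g 0) := by have := hxa 0; rwa [hx0] at this
  have e2 : g 2 = x⁻¹ (g 1) := by have := hxa 1; rwa [hx1] at this
  have e3 : g 3 = x⁻¹ (g 2) := by have := hxa 2; rwa [hx2] at this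
  have e5 : g 5 = y⁻¹ (g 0) := by have := hya 0; rwa [hy0] at this
  have f3 : g 3 = y⁻¹ (g 1) := by have := hya 1; rwa [hy1] at this
  have f5 : g 5 = x⁻¹ (g 5) := by have := hxa 5; rwa [hx5] at this
  have key : ∀ c : Fin 7,
      ¬ (x⁻¹ (x⁻¹ (x⁻¹ c)) = y⁻¹ (x⁻¹ c) ∧ y⁻¹ c = x⁻¹ (y⁻¹ c)) := by decide
  exact key (g 0) ⟨by rw [← e1, ← e2, ← e3, f3, e1], by rw [← e5]; exact f5⟩
end
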